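/- In the Milnor-Witt K-theory ring K^MW_*(E), for any units a, b ∈ E^×, one has [a][b] = ε·[b][a], where ε = −⟨−1⟩ = −(1 + η[−1]). In particular degree-1 symbols ε-commute. -/

import Mathlib

/-!  Milnor-Witt K-theory of a field `E`, presented by generators `[a]` (degree 1, `a ∈ Eˣ`)
and `η` (degree −1), with relations
`[a][1−a] = 0` (for `a ≠ 1`), `[ab] = [a] + [b] + η[a][b]`, `η[a] = [a]η`, `η(η[−1]+2) = 0`. -/

/-- Generators of Milnor-Witt K-theory: symbols `[a]` for units `a`, and `η`. -/
inductive MWGen (E : Type) [Field E] : Type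
  | sym : Eˣ → MWGen E
  | eta : MWGen E

namespace MWK

variable (E : Type) [Field E]

/-- The element `[a]` in the free algebra. -/
noncomputable def S (a : Eˣ) : FreeAlgebra ℤ (MWGen E) := FreeAlgebra.ι ℤ (MWGen.sym a)

/-- The element `η` in the free algebra. -/
noncomputable def H : FreeAlgebra ℤ (MWGen E) := FreeAlgebra.ι ℤ MWGen.eta

/-- The defining relations of Milnor-Witt K-theory. -/
inductive Rel : FreeAlgebra ℤ (MWGen E) → FreeAlgebra ℤ (MWGen E) → Prop
  | steinberg (a : Eˣ) (ha : (a : E) ≠ 1) :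
      Rel (S E a * S E (Units.mk0 (1 - (a : E)) (sub_ne_zero_of_ne (Ne.symm ha)))) 0
  | mul_symbol (a b : Eˣ) : Rel (S E (a * b)) (S E a + S E b + H E * S E a * S E b)
  | eta_comm (a : Eˣ) : Rel (H E * S E a) (S E a * H E)
  | eta_hyp : Rel (H E * (H E * S E (-1) + 2)) 0

end MWK

/-- The Milnor-Witt K-theory ring `K^MW_*(E)` of a field `E`. -/
noncomputable def KMW (E : Type) [Field E] : Type := RingQuot (MWK.Rel E)

noncomputable instance (E : Type) [Field E] : Ring (KMW E) :=
  inferInstanceAs (Ring (RingQuot (MWK.Rel E)))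

namespace KMW

variable {E : Type} [Field E]

/-- The symbol `[a] ∈ K^MW_1(E)`. -/
noncomputable def sym (a : Eˣ) : KMW E := RingQuot.mkRingHom (MWK.Rel E) (MWK.S E a)

/-- The symbol `η ∈ K^MW_{-1}(E)`. -/
noncomputable def eta : KMW E := RingQuot.mkRingHom (MWK.Rel E) (MWK.H E)

/-- The quadratic form `⟨a⟩ = 1 + η[a] ∈ K^MW_0(E)`. -/
noncomputable def form (a : Eˣ) : KMW E := 1 + eta * sym a

/-- `ε = −⟨−1⟩`. -/
noncomputable def eps : KMW E := - form (-1)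

end KMW

/-! `η` and every `⟨u⟩` are central, since they commute with the generators, and `u ↦ ⟨u⟩` is
multiplicative. The Steinberg relation for `a` and `a⁻¹` gives `[a][−a] = 0`, hence
`⟨−a⟩[a] = [a]` and `⟨a⟩[a] = ⟨−1⟩[a]`. Expanding `[ab][a(−b)] = 0` with `[ax] = [a] + ⟨a⟩[x]`
yields `[a][b] = −⟨a⟩[b][a] = −⟨−1⟩[b][a]`. -/

namespace KMW

variable {E : Type} [Field E]

/-- `RingQuot.mkRingHom`, retyped so that `map_mul` and friends produce the ring structure of
`KMW E`. -/
noncomputable def mk : FreeAlgebra ℤ (MWGen E) →+* KMW E := RingQuot.mkRingHom (MWK.Rel E)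

theorem mk_surjective : Function.Surjective (mk : FreeAlgebra ℤ (MWGen E) → KMW E) :=
  RingQuot.mkRingHom_surjective _

theorem mk_eq_mk {x y : FreeAlgebra ℤ (MWGen E)} (h : MWK.Rel E x y) : mk x = mk y :=
  RingQuot.mkRingHom_rel h

theorem mk_S (a : Eˣ) : mk (MWK.S E a) = sym a := rfl

theorem mk_H : mk (MWK.H E) = eta := rfl

theorem sym_mul (a b : Eˣ) : sym (a * b) = sym a + sym b + eta * sym a * sym b := by
  simpa only [map_add, map_mul, mk_S, mk_H] using mk_eq_mk (MWK.Rel.mul_symbol a b)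

theorem sym_mul_sym_one_sub (a : Eˣ) (ha : (a : E) ≠ 1) :
    sym a * sym (Units.mk0 (1 - (a : E)) (sub_ne_zero_of_ne (Ne.symm ha))) = 0 := by
  simpa only [map_mul, map_zero, mk_S] using mk_eq_mk (MWK.Rel.steinberg a ha)

theorem eta_mul_sym (a : Eˣ) : eta * sym a = sym a * eta := by
  simpa only [map_mul, mk_S, mk_H] using mk_eq_mk (MWK.Rel.eta_comm a)

theorem eta_mul_eta_mul_sym_neg_one_add_two : eta * (eta * sym (-1 : Eˣ) + 2) = (0 : KMW E) := by
  simpa only [map_add, map_mul, map_ofNat, map_zero, mk_S, mk_H] using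
    mk_eq_mk (MWK.Rel.eta_hyp (E := E))

theorem commute_of_commute_generators {c : KMW E} (hsym : ∀ a : Eˣ, Commute c (sym a))
    (heta : Commute c eta) (x : KMW E) : Commute c x := by
  obtain ⟨y, rfl⟩ := mk_surjective x
  induction y with
  | grade0 r =>
    simpa only [algebraMap_int_eq, eq_intCast, map_intCast] using Commute.intCast_right (n := r)
  | grade1 g =>
    cases g with
    | sym a => exact hsym a
    | eta => exact heta
  | mul y z hy hz => simpa only [map_mul] using hy.mul_right hz
  | add y z hy hz => simpa only [map_add] using hy.add_right hz

theorem eta_commute (x : KMW E) : Commute eta x :=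
  commute_of_commute_generators eta_mul_sym (Commute.refl _) x

theorem eta_mul_sym_mul_sym_comm (a b : Eˣ) : eta * sym a * sym b = eta * sym b * sym a := by
  have h := sym_mul b a
  rw [mul_comm b a, sym_mul a b, add_comm (sym b) (sym a)] at h
  exact add_left_cancel h

theorem form_commute (u : Eˣ) (x : KMW E) : Commute (form u) x := by
  refine commute_of_commute_generators (fun b => ?_) ?_ x
  · show (1 + eta * sym u) * sym b = sym b * (1 + eta * sym u)
    rw [add_mul, mul_add, one_mul, mul_one, ← mul_assoc (sym b), ← eta_mul_sym,
      eta_mul_sym_mul_sym_comm]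
  · exact (Commute.one_left _).add_left ((Commute.refl _).mul_left (eta_commute _).symm)

theorem eta_mul_sym_one : eta * sym (1 : Eˣ) = (0 : KMW E) := by
  have h : sym (1 : Eˣ) = (eta * sym (-1 : Eˣ) + 2) * sym (-1) := by
    rw [show sym (1 : Eˣ) = sym (-1 * -1) by rw [neg_mul_neg, one_mul], sym_mul]
    noncomm_ring
  rw [h, ← mul_assoc, eta_mul_eta_mul_sym_neg_one_add_two, zero_mul]

theorem sym_one : sym (1 : Eˣ) = (0 : KMW E) := by
  have h := sym_mul (1 : Eˣ) 1
  rw [one_mul, eta_mul_sym_one, zero_mul, add_zero] at h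
  exact add_eq_right.mp h.symm

theorem sym_mul_eq_add_form_mul (u v : Eˣ) : sym (u * v) = sym u + form u * sym v := by
  rw [sym_mul, form, add_mul, one_mul, add_assoc]

theorem form_mul (u v : Eˣ) : form (u * v) = form u * form v := by
  have h : eta * sym u * (eta * sym v) = eta * (eta * sym u * sym v) := by
    rw [(eta_commute _).symm.left_comm, mul_assoc]
  simp only [form, sym_mul, mul_add, add_mul, h]
  noncomm_ring

theorem sym_inv (u : Eˣ) : sym u⁻¹ = -(form u⁻¹ * sym u) := by
  have h := sym_mul_eq_add_form_mul u⁻¹ u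
  rw [inv_mul_cancel, sym_one] at h
  exact eq_neg_of_add_eq_zero_left h.symm

-- For `a ≠ 1`, `-a = (1 - a) / (1 - a⁻¹)`, and `[a]` kills both `[1 - a]` and `[1 - a⁻¹]`.
theorem sym_mul_sym_neg_self (a : Eˣ) : sym a * sym (-a) = (0 : KMW E) := by
  rcases eq_or_ne a 1 with rfl | ha
  · rw [sym_one, zero_mul]
  have ha' : (a : E) ≠ 1 := Units.val_eq_one.not.mpr ha
  have hinv : ((a⁻¹ : Eˣ) : E) ≠ 1 := by simpa using ha'
  set x : Eˣ := Units.mk0 (1 - (a : E)) (sub_ne_zero_of_ne (Ne.symm ha'))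
  set y : Eˣ := Units.mk0 (1 - ((a⁻¹ : Eˣ) : E)) (sub_ne_zero_of_ne (Ne.symm hinv))
  have hx : sym a * sym x = 0 := sym_mul_sym_one_sub a ha'
  have hy : sym a * sym y = 0 := by
    rw [← inv_inv a, sym_inv a⁻¹, neg_mul, mul_assoc, sym_mul_sym_one_sub a⁻¹ hinv,
      mul_zero, neg_zero]
  have hneg : -a = x * y⁻¹ := by
    rw [eq_mul_inv_iff_mul_eq]
    ext
    simp only [x, y, Units.val_mk0, Units.val_mul, Units.val_neg, Units.val_inv_eq_inv_val]
    field_simp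
    ring
  rw [hneg, sym_mul_eq_add_form_mul, sym_inv, mul_add, hx, mul_neg, mul_neg,
    (form_commute x _).symm.left_comm, (form_commute y⁻¹ _).symm.left_comm, hy, mul_zero,
    mul_zero, neg_zero, add_zero]

theorem form_neg_mul_sym (a : Eˣ) : form (-a) * sym a = sym a := by
  rw [form, add_mul, one_mul, eta_mul_sym_mul_sym_comm, mul_assoc, sym_mul_sym_neg_self,
    mul_zero, add_zero]

theorem form_mul_sym_self (a : Eˣ) : form a * sym a = form (-1) * sym a := by
  conv_rhs => rw [← form_neg_mul_sym a, ← mul_assoc, ← form_mul, neg_one_mul, neg_neg]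

theorem sym_mul_sym_neg (a b : Eˣ) :
    sym a * sym (-b) = form (-1) * (sym a * (sym b - sym a)) := by
  have h := sym_mul_sym_neg_self a
  rw [← neg_one_mul a, sym_mul_eq_add_form_mul, mul_add, (form_commute _ _).symm.left_comm] at h
  rw [← neg_one_mul b, sym_mul_eq_add_form_mul, mul_add, (form_commute _ _).symm.left_comm,
    mul_sub, mul_sub, eq_neg_of_add_eq_zero_left h]
  abel

theorem sym_mul_sym_eq_neg_form_mul (a b : Eˣ) :
    sym a * sym b = -(form a * (sym b * sym a)) := by
  have h := sym_mul_sym_neg_self (a * b)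
  rw [← mul_neg, sym_mul_eq_add_form_mul, sym_mul_eq_add_form_mul] at h
  have hcross : sym a * (form a * sym (-b)) = sym a * (sym b - sym a) := by
    rw [(form_commute a _).symm.left_comm, sym_mul_sym_neg, ← mul_assoc, ← form_mul, mul_neg_one,
      ← mul_assoc, form_neg_mul_sym]
  have hlast : form a * sym b * (form a * sym (-b)) = 0 := by
    rw [mul_assoc, (form_commute a _).symm.left_comm, sym_mul_sym_neg_self, mul_zero, mul_zero]
  rw [add_mul, mul_add, mul_add, hcross, hlast, add_zero, mul_sub, mul_assoc] at h
  rw [eq_neg_iff_add_eq_zero, ← h]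
  abel

end KMW

/-- In `K^MW_*(E)`, `[a][b] = ε·[b][a]` where `ε = −⟨−1⟩ = −(1 + η[−1])`:
degree-1 symbols ε-commute. -/
theorem kmw_eps_comm (E : Type) [Field E] (a b : Eˣ) :
    KMW.sym a * KMW.sym b = KMW.eps * (KMW.sym b * KMW.sym a) := by
  rw [KMW.sym_mul_sym_eq_neg_form_mul, (KMW.form_commute a _).left_comm, KMW.form_mul_sym_self,
    ← (KMW.form_commute _ _).left_comm, KMW.eps, neg_mul]
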